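/- Proposition 4 (multi-element energy estimate for the merged advection–diffusion scheme): let P = P^L ⊕ₘ P^R, Q = Q^L ⊕ₘ Q^R and K = K^L ⊕ₘ K^R be the merged (2p+1)×(2p+1) matrices (so P is symmetric positive definite, Q + Qᵀ = B⁽²ᵖ⁾ and K is positive semidefinite), set N = 2p and Dₓ = P⁻¹Q. If U : ℝ → ℝ^{N+1} is continuously differentiable and satisfies, for all t ≥ 0, P U′(t) + a Q U(t) = E B⁽ᴺ⁾ Dₓ U(t) − K U(t) + SAT(t), where SAT(t) = −e₀·(a·U₀(t) − ε₀·(Dₓ U(t))₀) + e_N·(−ε_N·(Dₓ U(t))_N), then for every t ≥ 0, U(t)ᵀ P U(t) + 2 ∫₀ᵗ U(s)ᵀ K U(s) ds ≤ U(0)ᵀ P U(0). -/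

import Mathlib

/-!
Dotting the scheme with `U` gives `Uᵀ P U' + Uᵀ K U = -(a/2) (U₀² + U_N²)`: the diffusive boundary
term `Uᵀ E B Dₓ U` is cancelled exactly by the `ε`-parts of the SAT, and since the interface
contributions of the two elements cancel, the merged `Q` is again SBP (`Q + Qᵀ = B⁽²ᵖ⁾`), so
`a Uᵀ Q U = (a/2) (U_N² - U₀²)`, whose inflow part is overcompensated by the SAT term `-a U₀²`.
As `P` is symmetric, `Uᵀ P U + 2 ∫ Uᵀ K U` then has derivative `2 (Uᵀ P U' + Uᵀ K U) ≤ 0`.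
-/

open Matrix

/-- The boundary matrix `B⁽ⁿ⁾`: `(0,0)` entry `−1`, `(n,n)` entry `1`, all other entries `0`. -/
def Bmat (n : ℕ) : Matrix (Fin (n+1)) (Fin (n+1)) ℝ :=
  Matrix.of fun i j =>
    if i = j ∧ i = Fin.last n then 1 else if i = j ∧ i = 0 then -1 else 0

/-- The merged `(2p+1)×(2p+1)` matrix `A = Aᴸ ⊕ₘ Aᴿ` built from two `(p+1)×(p+1)` element
matrices sharing the interface node `p`. -/
def merge {p : ℕ} (AL AR : Matrix (Fin (p+1)) (Fin (p+1)) ℝ) :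
    Matrix (Fin (2*p+1)) (Fin (2*p+1)) ℝ :=
  Matrix.of fun i j =>
    (if h : (i : ℕ) ≤ p ∧ (j : ℕ) ≤ p then
        AL ⟨i, by omega⟩ ⟨j, by omega⟩ else 0)
    + (if h : p ≤ (i : ℕ) ∧ p ≤ (j : ℕ) then
        AR ⟨(i : ℕ) - p, by have := i.isLt; omega⟩ ⟨(j : ℕ) - p, by have := j.isLt; omega⟩
      else 0)

theorem merge_transpose {p : ℕ} (AL AR : Matrix (Fin (p+1)) (Fin (p+1)) ℝ) :
    (merge AL AR)ᵀ = merge ALᵀ ARᵀ := by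
  ext i j
  simp only [merge, transpose_apply, of_apply]
  split_ifs <;> first | rfl | tauto

theorem merge_add {p : ℕ} (AL AR BL BR : Matrix (Fin (p+1)) (Fin (p+1)) ℝ) :
    merge AL AR + merge BL BR = merge (AL + BL) (AR + BR) := by
  ext i j
  simp only [merge, Matrix.add_apply, of_apply]
  split_ifs <;> ring

theorem Matrix.IsSymm.merge {p : ℕ} {AL AR : Matrix (Fin (p+1)) (Fin (p+1)) ℝ} (hL : AL.IsSymm)
    (hR : AR.IsSymm) : (merge AL AR).IsSymm := by
  rw [IsSymm, merge_transpose, hL.eq, hR.eq]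

theorem merge_Bmat {p : ℕ} (hp : 1 ≤ p) : merge (Bmat p) (Bmat p) = Bmat (2*p) := by
  ext i j
  have := i.isLt
  simp only [merge, Bmat, of_apply, Fin.ext_iff, Fin.val_last, Fin.val_zero]
  split_ifs <;> (try norm_num) <;> omega

theorem merge_add_transpose_eq_Bmat {p : ℕ} (hp : 1 ≤ p) {QL QR : Matrix (Fin (p+1)) (Fin (p+1)) ℝ}
    (hL : QL + QLᵀ = Bmat p) (hR : QR + QRᵀ = Bmat p) :
    merge QL QR + (merge QL QR)ᵀ = Bmat (2*p) := by
  rw [merge_transpose, merge_add, hL, hR, merge_Bmat hp]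

theorem Bmat_mulVec {n : ℕ} (hn : 0 < n) (w : Fin (n+1) → ℝ) :
    Bmat n *ᵥ w = Pi.single (Fin.last n) (w (Fin.last n)) - Pi.single 0 (w 0) := by
  ext i
  rw [mulVec, dotProduct, Finset.sum_eq_single i]
  · have : Fin.last n ≠ 0 := Fin.ext_iff.not.mpr hn.ne'
    by_cases hN : i = Fin.last n
    · subst hN; simp [Bmat, this]
    by_cases h0 : i = 0
    · subst h0; simp [Bmat, this.symm]
    · simp [Bmat, hN, h0]
  · intro j _ hj
    simp [Bmat, Ne.symm hj]
  · simp

theorem dotProduct_Bmat_mulVec {n : ℕ} (hn : 0 < n) (v w : Fin (n+1) → ℝ) :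
    v ⬝ᵥ Bmat n *ᵥ w = v (Fin.last n) * w (Fin.last n) - v 0 * w 0 := by
  rw [Bmat_mulVec hn, dotProduct_sub, dotProduct_single, dotProduct_single]

theorem two_mul_dotProduct_mulVec_self_of_add_transpose_eq_Bmat {n : ℕ} (hn : 0 < n)
    {Q : Matrix (Fin (n+1)) (Fin (n+1)) ℝ} (hQ : Q + Qᵀ = Bmat n) (u : Fin (n+1) → ℝ) :
    2 * (u ⬝ᵥ Q *ᵥ u) = u (Fin.last n) ^ 2 - u 0 ^ 2 := by
  have h := dotProduct_Bmat_mulVec hn u u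
  rw [← hQ, add_mulVec, dotProduct_add, mulVec_transpose, dotProduct_comm u (u ᵥ* Q),
    ← dotProduct_mulVec] at h
  linear_combination h

section Derivatives

variable {ι : Type*} [Fintype ι] {u v : ℝ → ι → ℝ} {u' v' : ι → ℝ} {t : ℝ}

theorem HasDerivAt.dotProduct (hu : HasDerivAt u u' t) (hv : HasDerivAt v v' t) :
    HasDerivAt (fun s => u s ⬝ᵥ v s) (u' ⬝ᵥ v t + u t ⬝ᵥ v') t := by
  have hui := hasDerivAt_pi.mp hu
  have hvi := hasDerivAt_pi.mp hv
  have h : HasDerivAt (fun s => ∑ i, u s i * v s i) (∑ i, (u' i * v t i + u t i * v' i)) t :=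
    HasDerivAt.fun_sum fun i _ => (hui i).mul (hvi i)
  simpa only [_root_.dotProduct, Finset.sum_add_distrib] using h

theorem HasDerivAt.matrix_mulVec (M : Matrix ι ι ℝ) (hu : HasDerivAt u u' t) :
    HasDerivAt (fun s => M *ᵥ u s) (M *ᵥ u') t :=
  hasDerivAt_pi.mpr fun i => by
    simpa [mulVec] using (hasDerivAt_const t (M i)).dotProduct hu

theorem HasDerivAt.dotProduct_mulVec_self {M : Matrix ι ι ℝ} (hM : M.IsSymm)
    (hu : HasDerivAt u u' t) :
    HasDerivAt (fun s => u s ⬝ᵥ M *ᵥ u s) (2 * (u t ⬝ᵥ M *ᵥ u')) t := by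
  convert hu.dotProduct (hu.matrix_mulVec M) using 1
  rw [dotProduct_mulVec, ← mulVec_transpose, hM.eq, dotProduct_comm, two_mul]

end Derivatives

theorem energy_add_two_mul_integral_le_of_dissipation {ι : Type*} [Fintype ι]
    {P : Matrix ι ι ℝ} (hP : P.IsSymm) (K : Matrix ι ι ℝ) {U : ℝ → ι → ℝ} (hU : ContDiff ℝ 1 U)
    (hdiss : ∀ t, 0 ≤ t → U t ⬝ᵥ P *ᵥ deriv U t + U t ⬝ᵥ K *ᵥ U t ≤ 0) {t : ℝ} (ht : 0 ≤ t) :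
    U t ⬝ᵥ P *ᵥ U t + 2 * ∫ s in (0:ℝ)..t, U s ⬝ᵥ K *ᵥ U s ≤ U 0 ⬝ᵥ P *ᵥ U 0 := by
  have hU' (s : ℝ) : HasDerivAt U (deriv U s) s :=
    (hU.differentiable one_ne_zero s).hasDerivAt
  have hK : Continuous fun s => U s ⬝ᵥ K *ᵥ U s :=
    hU.continuous.dotProduct (continuous_const.matrix_mulVec hU.continuous)
  have hF (s : ℝ) : HasDerivAt
      (fun r => U r ⬝ᵥ P *ᵥ U r + 2 * ∫ x in (0:ℝ)..r, U x ⬝ᵥ K *ᵥ U x)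
      (2 * (U s ⬝ᵥ P *ᵥ deriv U s + U s ⬝ᵥ K *ᵥ U s)) s := by
    rw [mul_add]
    exact ((hU' s).dotProduct_mulVec_self hP).add
      ((hK.integral_hasStrictDerivAt 0 s).hasDerivAt.const_mul 2)
  have hanti := antitoneOn_of_hasDerivWithinAt_nonpos (convex_Ici (0:ℝ))
    (fun s _ => (hF s).continuousAt.continuousWithinAt) (fun s _ => (hF s).hasDerivWithinAt)
    (fun s hs => mul_nonpos_of_nonneg_of_nonpos zero_le_two
      (hdiss s (interior_subset hs)))
  simpa using hanti Set.self_mem_Ici ht ht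

def boundarySAT {n : ℕ} (a : ℝ) (ε : Fin (n+1) → ℝ) (Dx : Matrix (Fin (n+1)) (Fin (n+1)) ℝ)
    (u : Fin (n+1) → ℝ) : Fin (n+1) → ℝ :=
  (-(a * u 0 - ε 0 * (Dx *ᵥ u) 0)) • Pi.single 0 1
    + (-(ε (Fin.last n) * (Dx *ᵥ u) (Fin.last n))) • Pi.single (Fin.last n) 1

theorem energy_rate_eq_of_semidiscrete {n : ℕ} (hn : 0 < n) {a : ℝ} {ε : Fin (n+1) → ℝ}
    {P Q K Dx : Matrix (Fin (n+1)) (Fin (n+1)) ℝ} (hQ : Q + Qᵀ = Bmat n) {u u' : Fin (n+1) → ℝ}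
    (h : P *ᵥ u' + a • Q *ᵥ u
      = (diagonal ε * Bmat n * Dx) *ᵥ u - K *ᵥ u + boundarySAT a ε Dx u) :
    u ⬝ᵥ P *ᵥ u' + u ⬝ᵥ K *ᵥ u = -(a / 2) * (u 0 ^ 2 + u (Fin.last n) ^ 2) := by
  have hdot := congrArg (u ⬝ᵥ ·) h
  simp only [dotProduct_add, dotProduct_sub, dotProduct_smul, smul_eq_mul, boundarySAT,
    dotProduct_single, ← mulVec_mulVec, dotProduct_mulVec u (diagonal ε), vecMul_diagonal,
    dotProduct_Bmat_mulVec hn] at hdot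
  linear_combination hdot
    - (a / 2) * two_mul_dotProduct_mulVec_self_of_add_transpose_eq_Bmat hn hQ u

theorem stmt10_general (p : ℕ) (hp : 1 ≤ p) (a : ℝ) (ha : 0 ≤ a)
    (dL dR : Fin (p+1) → ℝ)
    (PL PR QL QR : Matrix (Fin (p+1)) (Fin (p+1)) ℝ)
    (hPL : PL = Matrix.diagonal dL) (hPR : PR = Matrix.diagonal dR)
    (hQL : QL + QLᵀ = Bmat p) (hQR : QR + QRᵀ = Bmat p)
    (P Q K : Matrix (Fin (2*p+1)) (Fin (2*p+1)) ℝ)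
    (hP : P = merge PL PR) (hQ : Q = merge QL QR)
    (ε : Fin (2*p+1) → ℝ)
    (E Dx : Matrix (Fin (2*p+1)) (Fin (2*p+1)) ℝ)
    (hE : E = Matrix.diagonal ε)
    (U : ℝ → Fin (2*p+1) → ℝ) (hU : ContDiff ℝ 1 U)
    (hode : ∀ t : ℝ, 0 ≤ t →
      P.mulVec (deriv U t) + a • Q.mulVec (U t)
        = (E * Bmat (2*p) * Dx).mulVec (U t) - K.mulVec (U t)
          + ((-(a * U t 0 - ε 0 * Dx.mulVec (U t) 0)) • (Pi.single 0 1 : Fin (2*p+1) → ℝ)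
             + (-(ε (Fin.last (2*p)) * Dx.mulVec (U t) (Fin.last (2*p))))
                • (Pi.single (Fin.last (2*p)) 1 : Fin (2*p+1) → ℝ))) :
    ∀ t : ℝ, 0 ≤ t →
      U t ⬝ᵥ P.mulVec (U t) + 2 * ∫ s in (0:ℝ)..t, U s ⬝ᵥ K.mulVec (U s)
        ≤ U 0 ⬝ᵥ P.mulVec (U 0) := by
  intro t ht
  subst hE
  have hPsymm : P.IsSymm := by
    rw [hP, hPL, hPR]
    exact (isSymm_diagonal dL).merge (isSymm_diagonal dR)
  have hQB : Q + Qᵀ = Bmat (2*p) := hQ ▸ merge_add_transpose_eq_Bmat hp hQL hQR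
  refine energy_add_two_mul_integral_le_of_dissipation hPsymm K hU (fun s hs => ?_) ht
  rw [energy_rate_eq_of_semidiscrete (by omega) hQB (hode s hs)]
  exact mul_nonpos_of_nonpos_of_nonneg (by linarith) (by positivity)

/-- **Proposition 4.** Multi-element energy estimate for the merged
advection–diffusion scheme: with `P = Pᴸ ⊕ₘ Pᴿ`, `Q = Qᴸ ⊕ₘ Qᴿ`, `K = Kᴸ ⊕ₘ Kᴿ`,
`N = 2p`, `Dₓ = P⁻¹Q`, if `P U′ + a Q U = E B⁽ᴺ⁾ Dₓ U − K U + SAT` with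
`SAT = −e₀ (a U₀ − ε₀ (Dₓ U)₀) + e_N (−ε_N (Dₓ U)_N)`, then for all `t ≥ 0`,
`U(t)ᵀ P U(t) + 2 ∫₀ᵗ U(s)ᵀ K U(s) ds ≤ U(0)ᵀ P U(0)`. -/
theorem stmt10 (p : ℕ) (hp : 1 ≤ p) (a : ℝ) (ha : 0 ≤ a)
    (dL dR : Fin (p+1) → ℝ) (hdL : ∀ i, 0 < dL i) (hdR : ∀ i, 0 < dR i)
    (PL PR QL QR KL KR : Matrix (Fin (p+1)) (Fin (p+1)) ℝ)
    (hPL : PL = Matrix.diagonal dL) (hPR : PR = Matrix.diagonal dR)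
    (hQL : QL + QLᵀ = Bmat p) (hQR : QR + QRᵀ = Bmat p)
    (hKL : ∀ v : Fin (p+1) → ℝ, 0 ≤ v ⬝ᵥ KL.mulVec v)
    (hKR : ∀ v : Fin (p+1) → ℝ, 0 ≤ v ⬝ᵥ KR.mulVec v)
    (P Q K : Matrix (Fin (2*p+1)) (Fin (2*p+1)) ℝ)
    (hP : P = merge PL PR) (hQ : Q = merge QL QR) (hK : K = merge KL KR)
    (ε : Fin (2*p+1) → ℝ) (hε : ∀ i, 0 ≤ ε i)
    (E Dx : Matrix (Fin (2*p+1)) (Fin (2*p+1)) ℝ)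
    (hE : E = Matrix.diagonal ε) (hDx : Dx = P⁻¹ * Q)
    (U : ℝ → Fin (2*p+1) → ℝ) (hU : ContDiff ℝ 1 U)
    (hode : ∀ t : ℝ, 0 ≤ t →
      P.mulVec (deriv U t) + a • Q.mulVec (U t)
        = (E * Bmat (2*p) * Dx).mulVec (U t) - K.mulVec (U t)
          + ((-(a * U t 0 - ε 0 * Dx.mulVec (U t) 0)) • (Pi.single 0 1 : Fin (2*p+1) → ℝ)
             + (-(ε (Fin.last (2*p)) * Dx.mulVec (U t) (Fin.last (2*p))))
                • (Pi.single (Fin.last (2*p)) 1 : Fin (2*p+1) → ℝ))) :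
    ∀ t : ℝ, 0 ≤ t →
      U t ⬝ᵥ P.mulVec (U t) + 2 * ∫ s in (0:ℝ)..t, U s ⬝ᵥ K.mulVec (U s)
        ≤ U 0 ⬝ᵥ P.mulVec (U 0) :=
  stmt10_general p hp a ha dL dR PL PR QL QR hPL hPR hQL hQR P Q K hP hQ ε E Dx hE U hU hode
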